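/- Let ν > 1 and 1/ν + 1/ν² < F < 2, and set H_R := 1/ν² and H_* := (−ν−1+√(8F²ν⁴+ν²+2ν+1)) H_R/(2(ν+1)). Then H_*(H_R + √H_R + 1)² − H_R(2F² + 1) > 0. -/

import Mathlib

open Real

/-!
Squaring out the root shows that `H_*` is the positive solution of
`(ν + 1)² H (H + H_R) = 2F²`, whose left side increases in `H ≥ 0`. The claim says
`H_* > H₀ := (2F² + 1) ν² / (ν² + ν + 1)²`, so it suffices that `H₀` undershoots the
equation. Cleared of denominators this is a concave quadratic inequality in `G = F²`,
hence it is enough to check it at the ends `G = (ν + 1)² / ν⁴` and `G = 4` of the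
discontinuous regime.
-/

lemma lt_of_mul_add_self_lt_mul_add_self {a x y : ℝ} (ha : 0 ≤ a) (hy : 0 ≤ y)
    (h : x * (x + a) < y * (y + a)) : x < y := by
  by_contra! hyx
  nlinarith [mul_le_mul hyx (add_le_add_left hyx a) (by linarith) (by linarith)]

lemma quadratic_pos_of_pos_of_nonneg {a b c s t u : ℝ} (ha : a ≤ 0) (hst : s < t) (htu : t < u)
    (hs : 0 < a * s ^ 2 + b * s + c) (hu : 0 ≤ a * u ^ 2 + b * u + c) :
    0 < a * t ^ 2 + b * t + c := by
  have hinterp : (u - s) * (a * t ^ 2 + b * t + c) = (u - t) * (a * s ^ 2 + b * s + c)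
      + (t - s) * (a * u ^ 2 + b * u + c) + -a * ((t - s) * (u - t)) * (u - s) := by ring
  have hconc : 0 ≤ -a * ((t - s) * (u - t)) * (u - s) :=
    mul_nonneg (mul_nonneg (by linarith) (mul_nonneg (by linarith) (by linarith))) (by linarith)
  have hpos : 0 < (u - s) * (a * t ^ 2 + b * t + c) := by
    rw [hinterp]
    nlinarith [mul_pos (sub_pos.2 htu) hs, mul_nonneg (sub_pos.2 hst).le hu]
  exact pos_of_mul_pos_right hpos (by linarith)

/-- The state `H_*` on the left of the subshock, for `H_R = 1 / ν²`. -/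
noncomputable def subshockState (F nu : ℝ) : ℝ :=
  (-nu - 1 + √(8 * F ^ 2 * nu ^ 4 + nu ^ 2 + 2 * nu + 1)) * (1 / nu ^ 2) / (2 * (nu + 1))

section subshockState

variable {F nu : ℝ}

lemma subshockState_nonneg (hnu : 0 < nu + 1) : 0 ≤ subshockState F nu := by
  have hroot : nu + 1 ≤ √(8 * F ^ 2 * nu ^ 4 + nu ^ 2 + 2 * nu + 1) :=
    Real.le_sqrt_of_sq_le (by nlinarith [sq_nonneg (F * nu ^ 2)])
  unfold subshockState
  apply div_nonneg (mul_nonneg (by linarith) (by positivity)) (by linarith)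

lemma subshockState_equation (hnu₀ : nu ≠ 0) (hnu₁ : nu + 1 ≠ 0) :
    (nu + 1) ^ 2 * subshockState F nu * (subshockState F nu + 1 / nu ^ 2) = 2 * F ^ 2 := by
  have hsq := Real.sq_sqrt (show 0 ≤ 8 * F ^ 2 * nu ^ 4 + nu ^ 2 + 2 * nu + 1 by
    nlinarith [sq_nonneg (F * nu ^ 2), sq_nonneg (nu + 1)])
  unfold subshockState
  set r := √(8 * F ^ 2 * nu ^ 4 + nu ^ 2 + 2 * nu + 1)
  field_simp
  linear_combination hsq

lemma lt_subshockState {x : ℝ} (hnu : 0 < nu)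
    (hx : (nu + 1) ^ 2 * x * (x + 1 / nu ^ 2) < 2 * F ^ 2) : x < subshockState F nu := by
  have hnu₁ : 0 < nu + 1 := by linarith
  refine lt_of_mul_add_self_lt_mul_add_self (a := 1 / nu ^ 2) (by positivity)
    (subshockState_nonneg hnu₁) ?_
  rw [← mul_lt_mul_iff_right₀ (pow_pos hnu₁ 2), ← mul_assoc, ← mul_assoc,
    subshockState_equation hnu.ne' hnu₁.ne']
  exact hx

end subshockState

/-- In `t = ν - 1` all coefficients are nonnegative; the lowest ones vanish. -/
lemma boundary_quadratic_nonneg_at_four {nu : ℝ} (hnu : 1 ≤ nu) :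
    0 ≤ 8 * ((nu ^ 2 + nu + 1) ^ 2) ^ 2
      - 9 * (nu + 1) ^ 2 * (9 * nu ^ 4 + (nu ^ 2 + nu + 1) ^ 2) := by
  obtain ⟨t, ht, rfl⟩ : ∃ t, 0 ≤ t ∧ nu = t + 1 := ⟨nu - 1, by linarith, by ring⟩
  ring_nf
  positivity

lemma boundary_quadratic_pos {nu G : ℝ} (hnu : 1 < nu) (hGlow : (nu + 1) ^ 2 / nu ^ 4 < G)
    (hG4 : G < 4) :
    (nu + 1) ^ 2 * (2 * G + 1) * ((2 * G + 1) * nu ^ 4 + (nu ^ 2 + nu + 1) ^ 2)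
      < 2 * G * ((nu ^ 2 + nu + 1) ^ 2) ^ 2 := by
  set D := (nu ^ 2 + nu + 1) ^ 2
  -- multiplied by `ν⁴`, this is `(ν + 1)² (2 D² - E (E + D))`, and `E < D`
  have hlow : 0 < -(4 * (nu + 1) ^ 2 * nu ^ 4) * ((nu + 1) ^ 2 / nu ^ 4) ^ 2
      + (2 * D ^ 2 - 2 * (nu + 1) ^ 2 * D - 4 * (nu + 1) ^ 2 * nu ^ 4) * ((nu + 1) ^ 2 / nu ^ 4)
      - (nu + 1) ^ 2 * (nu ^ 4 + D) := by
    set E := 2 * (nu + 1) ^ 2 + nu ^ 4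
    have hED : 0 < D - E := by
      rw [show D - E = (nu - 1) * (nu + 1) * (2 * nu + 1) by ring]
      exact mul_pos (mul_pos (by linarith) (by linarith)) (by linarith)
    have hE : 0 < E := by positivity
    have hdiff : 0 < 2 * D ^ 2 - E * (E + D) := by nlinarith
    have hscaled : 0 < (nu + 1) ^ 2 * (2 * D ^ 2 - E * (E + D)) / nu ^ 4 := by positivity
    convert hscaled using 1
    field_simp
    ring
  have hup := boundary_quadratic_nonneg_at_four hnu.le
  have hquad := quadratic_pos_of_pos_of_nonneg (a := -(4 * (nu + 1) ^ 2 * nu ^ 4))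
    (b := 2 * D ^ 2 - 2 * (nu + 1) ^ 2 * D - 4 * (nu + 1) ^ 2 * nu ^ 4)
    (c := -((nu + 1) ^ 2 * (nu ^ 4 + D))) (neg_nonpos.2 (by positivity)) hGlow hG4
    (by linarith) (by linarith)
  linarith

lemma boundary_state_lt_subshockState {F nu : ℝ} (hnu : 1 < nu) (hF : (nu + 1) / nu ^ 2 < F)
    (hF2 : F < 2) : (2 * F ^ 2 + 1) * nu ^ 2 / (nu ^ 2 + nu + 1) ^ 2 < subshockState F nu := by
  have hnu₀ : 0 < nu := by linarith
  have hF₀ : 0 < F := lt_trans (by positivity) hF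
  have hG := boundary_quadratic_pos hnu
    (by
      rw [show (nu + 1) ^ 2 / nu ^ 4 = ((nu + 1) / nu ^ 2) ^ 2 by ring]
      exact pow_lt_pow_left₀ hF (by positivity) two_ne_zero)
    (by nlinarith)
  apply lt_subshockState hnu₀
  have hcleared : 2 * F ^ 2 - (nu + 1) ^ 2 * ((2 * F ^ 2 + 1) * nu ^ 2 / (nu ^ 2 + nu + 1) ^ 2)
        * ((2 * F ^ 2 + 1) * nu ^ 2 / (nu ^ 2 + nu + 1) ^ 2 + 1 / nu ^ 2)
      = (2 * F ^ 2 * ((nu ^ 2 + nu + 1) ^ 2) ^ 2 - (nu + 1) ^ 2 * (2 * F ^ 2 + 1)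
        * ((2 * F ^ 2 + 1) * nu ^ 4 + (nu ^ 2 + nu + 1) ^ 2)) / ((nu ^ 2 + nu + 1) ^ 2) ^ 2 := by
    field_simp
  rw [← sub_pos, hcleared]
  exact div_pos (sub_pos.2 hG) (by positivity)

theorem Hstar_boundary_estimate (F nu : ℝ) (hnu : 1 < nu)
    (hFlow : 1 / nu + 1 / nu ^ 2 < F) (hF2 : F < 2) :
    let HR := 1 / nu ^ 2
    let Hstar := (-nu - 1 + Real.sqrt (8 * F ^ 2 * nu ^ 4 + nu ^ 2 + 2 * nu + 1)) * HR /
      (2 * (nu + 1))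
    Hstar * (HR + Real.sqrt HR + 1) ^ 2 - HR * (2 * F ^ 2 + 1) > 0 := by
  intro HR Hstar
  have hnu₀ : 0 < nu := by linarith
  have hsqrt : √HR = 1 / nu := by
    rw [show HR = (1 / nu) ^ 2 by ring, Real.sqrt_sq (by positivity)]
  have hF : (nu + 1) / nu ^ 2 < F := by
    convert hFlow using 1
    field_simp
  have hfactor : Hstar * (HR + √HR + 1) ^ 2 - HR * (2 * F ^ 2 + 1)
      = (subshockState F nu - (2 * F ^ 2 + 1) * nu ^ 2 / (nu ^ 2 + nu + 1) ^ 2)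
        * ((nu ^ 2 + nu + 1) ^ 2 / nu ^ 4) := by
    rw [hsqrt]
    simp only [Hstar, HR, subshockState]
    field_simp
    ring
  rw [hfactor]
  exact mul_pos (sub_pos.2 (boundary_state_lt_subshockState hnu hF hF2)) (by positivity)
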